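/- Let G be a discrete group, p > 0, and E ⊆ G such that ‖λ_G(f)‖ ≤ p·‖f‖₂ for every finitely supported f : G → ℂ with support in E. For m ≤ n positive integers, let P_m^n = {(g₁,…,g_n) ∈ Gⁿ : exactly m of the g_i are not the identity}. Then for every finitely supported φ : Gⁿ → ℂ with support contained in Eⁿ ∩ P_m^n, we have ‖λ_{Gⁿ}(φ)‖ ≤ binom(n,m)^{1/2} · p^m · ‖φ‖₂. -/

import Mathlib

open scoped BigOperators

/-- Convolution of a finitely supported function with an arbitrary function. -/
noncomputable def conv {G : Type*} [Group G] (f : G →₀ ℂ) (ω : G → ℂ) : G → ℂ :=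
  fun g => ∑ h ∈ f.support, f h * ω (h⁻¹ * g)

/-- Squared ℓ²-norm of a finitely supported function. -/
noncomputable def l2sq {G : Type*} (f : G →₀ ℂ) : ℝ :=
  ∑ g ∈ f.support, ‖f g‖ ^ 2

/-- `OpBound p f`: the convolution operator `λ(f)` on `ℓ²` has norm at most `p·‖f‖₂`. -/
def OpBound {G : Type*} [Group G] (p : ℝ) (f : G →₀ ℂ) : Prop :=
  ∀ ω : G → ℂ, Summable (fun g => ‖ω g‖ ^ 2) →
    ∑' g, ‖conv f ω g‖ ^ 2 ≤ p ^ 2 * l2sq f * ∑' g, ‖ω g‖ ^ 2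


open scoped ENNReal NNReal

/-- ENNReal-valued squared ℓ² norm of an arbitrary function. -/
noncomputable def en {X : Type*} (v : X → ℂ) : ℝ≥0∞ := ∑' x, (‖v x‖₊ : ℝ≥0∞) ^ 2

noncomputable def enl2 {G : Type*} (f : G →₀ ℂ) : ℝ≥0∞ := ∑' g, (‖f g‖₊ : ℝ≥0∞) ^ 2

/-- ENNReal version of the operator bound. -/
def OpB {G : Type*} [Group G] (P : ℝ≥0) (f : G →₀ ℂ) : Prop :=
  ∀ ω : G → ℂ, en (conv f ω) ≤ (P : ℝ≥0∞) ^ 2 * enl2 f * en ω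

lemma conv_eq_sum_subset {G : Type*} [Group G] {f : G →₀ ℂ} {s : Finset G}
    (hs : f.support ⊆ s) (ω : G → ℂ) (g : G) :
    conv f ω g = ∑ h ∈ s, f h * ω (h⁻¹ * g) := by
  unfold conv
  exact Finset.sum_subset hs (fun h _ hh => by
    simp [Finsupp.notMem_support_iff.mp hh])

lemma enl2_eq_sum {G : Type*} (f : G →₀ ℂ) :
    enl2 f = ∑ g ∈ f.support, (‖f g‖₊ : ℝ≥0∞) ^ 2 := by
  refine tsum_eq_sum (fun g hg => by simp [Finsupp.notMem_support_iff.mp hg])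

lemma enl2_ne_top {G : Type*} (f : G →₀ ℂ) : enl2 f ≠ ∞ := by
  rw [enl2_eq_sum]
  exact (ENNReal.sum_lt_top.2 (fun g _ => by
    exact ENNReal.pow_lt_top ENNReal.coe_lt_top)).ne

lemma enl2_eq_zero_iff {G : Type*} {f : G →₀ ℂ} : enl2 f = 0 ↔ f = 0 := by
  constructor
  · intro h
    ext g
    have := ENNReal.le_tsum (f := fun g => (‖f g‖₊ : ℝ≥0∞) ^ 2) g
    rw [← enl2] at this
    simp only [h, le_zero_iff, pow_eq_zero_iff, ENNReal.coe_eq_zero, nnnorm_eq_zero] at this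
    simpa using this
  · rintro rfl; simp [enl2]

lemma M2 {X : Type*} (f g : X → ℝ≥0∞) :
    (∑' x, (f x + g x) ^ 2) ^ (2⁻¹ : ℝ) ≤
      (∑' x, f x ^ 2) ^ (2⁻¹ : ℝ) + (∑' x, g x ^ 2) ^ (2⁻¹ : ℝ) := by
  letI : MeasurableSpace X := ⊤
  haveI : MeasurableSingletonClass X := ⟨fun _ => trivial⟩
  have hf : AEMeasurable f (MeasureTheory.Measure.count) :=
    (Measurable.of_comap_le le_top).aemeasurable
  have hg : AEMeasurable g (MeasureTheory.Measure.count) :=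
    (Measurable.of_comap_le le_top).aemeasurable
  have H := ENNReal.lintegral_Lp_add_le hf hg (p := 2) one_le_two
  rw [MeasureTheory.lintegral_count, MeasureTheory.lintegral_count,
    MeasureTheory.lintegral_count] at H
  have e1 : ∀ u : ℝ≥0∞, u ^ (2 : ℕ) = u ^ (2 : ℝ) := fun u => by
    rw [← ENNReal.rpow_natCast]; norm_num
  simp_rw [e1, (by norm_num : (2⁻¹ : ℝ) = 1 / 2)]
  exact H

lemma MK {X ι : Type*} (s : Finset ι) (a : ι → X → ℝ≥0∞) :
    (∑' x, (∑ i ∈ s, a i x) ^ 2) ^ (2⁻¹ : ℝ) ≤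
      ∑ i ∈ s, (∑' x, a i x ^ 2) ^ (2⁻¹ : ℝ) := by
  classical
  induction s using Finset.induction_on with
  | empty => simp [ENNReal.zero_rpow_of_pos]
  | insert j s' hj ih =>
    calc (∑' x, (∑ i ∈ insert j s', a i x) ^ 2) ^ (2⁻¹ : ℝ)
        = (∑' x, (a j x + ∑ i ∈ s', a i x) ^ 2) ^ (2⁻¹ : ℝ) := by
          simp [Finset.sum_insert hj]
      _ ≤ (∑' x, a j x ^ 2) ^ (2⁻¹ : ℝ) + (∑' x, (∑ i ∈ s', a i x) ^ 2) ^ (2⁻¹ : ℝ) :=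
          M2 _ _
      _ ≤ (∑' x, a j x ^ 2) ^ (2⁻¹ : ℝ) + ∑ i ∈ s', (∑' x, a i x ^ 2) ^ (2⁻¹ : ℝ) := by
          gcongr
      _ = _ := by rw [Finset.sum_insert hj]

/-- squared form of Minkowski. -/
lemma MKsq {X ι : Type*} (s : Finset ι) (a : ι → X → ℝ≥0∞) :
    ∑' x, (∑ i ∈ s, a i x) ^ 2 ≤ (∑ i ∈ s, (∑' x, a i x ^ 2) ^ (2⁻¹ : ℝ)) ^ 2 := by
  have h := MK s a
  have h2 : ((∑' x, (∑ i ∈ s, a i x) ^ 2) ^ (2⁻¹ : ℝ)) ^ 2 ≤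
      (∑ i ∈ s, (∑' x, a i x ^ 2) ^ (2⁻¹ : ℝ)) ^ 2 := by
    exact pow_le_pow_left' h 2
  calc ∑' x, (∑ i ∈ s, a i x) ^ 2
      = ((∑' x, (∑ i ∈ s, a i x) ^ 2) ^ (2⁻¹ : ℝ)) ^ 2 := by
        rw [← ENNReal.rpow_natCast _ 2, ← ENNReal.rpow_mul]
        norm_num
    _ ≤ _ := h2

/-- Cauchy-Schwarz (crude form) in `ℝ≥0∞` via `NNReal`. -/
lemma sq_sum_le_card_ennreal {ι : Type*} (s : Finset ι) (c : ι → ℝ≥0) :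
    ((∑ i ∈ s, c i : ℝ≥0) : ℝ≥0∞) ^ 2 ≤ (s.card : ℝ≥0∞) * ∑ i ∈ s, (c i : ℝ≥0∞) ^ 2 := by
  have h := sq_sum_le_card_mul_sum_sq (s := s) (f := c)
  calc ((∑ i ∈ s, c i : ℝ≥0) : ℝ≥0∞) ^ 2 = (((∑ i ∈ s, c i) ^ 2 : ℝ≥0) : ℝ≥0∞) := by
        push_cast; ring
    _ ≤ (((s.card : ℝ≥0) * ∑ i ∈ s, c i ^ 2 : ℝ≥0) : ℝ≥0∞) := by
        exact_mod_cast ENNReal.coe_le_coe.2 h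
    _ = _ := by push_cast; ring

lemma en_shift {G : Type*} [Group G] (ω : G → ℂ) (h : G) :
    ∑' g : G, (‖ω (h⁻¹ * g)‖₊ : ℝ≥0∞) ^ 2 = en ω := by
  exact Equiv.tsum_eq (Equiv.mulLeft h⁻¹) (fun u => (‖ω u‖₊ : ℝ≥0∞) ^ 2)

lemma nnnorm_conv_le {G : Type*} [Group G] (f : G →₀ ℂ) (ω : G → ℂ) (g : G) :
    ‖conv f ω g‖₊ ≤ ∑ h ∈ f.support, ‖f h‖₊ * ‖ω (h⁻¹ * g)‖₊ := by
  refine (nnnorm_sum_le _ _).trans ?_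
  simp [nnnorm_mul]

lemma en_conv_le {G : Type*} [Group G] (f : G →₀ ℂ) (ω : G → ℂ) :
    en (conv f ω) ≤ (f.support.card : ℝ≥0∞) * enl2 f * en ω := by
  have step : ∀ g : G, (‖conv f ω g‖₊ : ℝ≥0∞) ^ 2 ≤
      (f.support.card : ℝ≥0∞) * ∑ h ∈ f.support,
        (‖f h‖₊ : ℝ≥0∞) ^ 2 * (‖ω (h⁻¹ * g)‖₊ : ℝ≥0∞) ^ 2 := by
    intro g
    calc (‖conv f ω g‖₊ : ℝ≥0∞) ^ 2
        ≤ ((∑ h ∈ f.support, ‖f h‖₊ * ‖ω (h⁻¹ * g)‖₊ : ℝ≥0) : ℝ≥0∞) ^ 2 := by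
          gcongr
          exact_mod_cast nnnorm_conv_le f ω g
      _ ≤ (f.support.card : ℝ≥0∞) * ∑ h ∈ f.support,
            ((‖f h‖₊ * ‖ω (h⁻¹ * g)‖₊ : ℝ≥0) : ℝ≥0∞) ^ 2 :=
          sq_sum_le_card_ennreal _ _
      _ = _ := by
          congr 1
          refine Finset.sum_congr rfl (fun h _ => ?_)
          push_cast; ring
  calc en (conv f ω) ≤ ∑' g, (f.support.card : ℝ≥0∞) * ∑ h ∈ f.support,
        (‖f h‖₊ : ℝ≥0∞) ^ 2 * (‖ω (h⁻¹ * g)‖₊ : ℝ≥0∞) ^ 2 :=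
        ENNReal.tsum_le_tsum step
    _ = (f.support.card : ℝ≥0∞) * ∑ h ∈ f.support,
        (‖f h‖₊ : ℝ≥0∞) ^ 2 * ∑' g, (‖ω (h⁻¹ * g)‖₊ : ℝ≥0∞) ^ 2 := by
        rw [ENNReal.tsum_mul_left]
        congr 1
        rw [Summable.tsum_finsetSum (fun i _ => ENNReal.summable)]
        exact Finset.sum_congr rfl (fun h _ => ENNReal.tsum_mul_left)
    _ = _ := by
        rw [enl2_eq_sum, mul_assoc, Finset.sum_mul]
        congr 1
        exact Finset.sum_congr rfl (fun h _ => by rw [en_shift])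

lemma summable_iff_en_ne_top {X : Type*} (v : X → ℂ) :
    Summable (fun x => ‖v x‖ ^ 2) ↔ en v ≠ ∞ := by
  have e : ∀ x, (‖v x‖₊ : ℝ≥0∞) ^ 2 = ((‖v x‖₊ ^ 2 : ℝ≥0) : ℝ≥0∞) := by
    intro x; push_cast; ring
  unfold en
  simp_rw [e]
  rw [ENNReal.tsum_coe_ne_top_iff_summable]
  rw [← NNReal.summable_coe]
  have e2 : (fun x => ((‖v x‖₊ ^ 2 : ℝ≥0) : ℝ)) = fun x => ‖v x‖ ^ 2 := by
    funext x; push_cast; ring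
  rw [e2]

lemma en_eq_ofReal {X : Type*} {v : X → ℂ} (h : Summable fun x => ‖v x‖ ^ 2) :
    en v = ENNReal.ofReal (∑' x, ‖v x‖ ^ 2) := by
  rw [ENNReal.ofReal_tsum_of_nonneg (fun x => by positivity) h]
  unfold en
  congr 1
  funext x
  rw [← enorm_eq_nnnorm, ← ofReal_norm, ← ENNReal.ofReal_pow (norm_nonneg _)]

lemma summable_conv {G : Type*} [Group G] (f : G →₀ ℂ) {ω : G → ℂ}
    (hω : Summable fun g => ‖ω g‖ ^ 2) : Summable fun g => ‖conv f ω g‖ ^ 2 := by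
  rw [summable_iff_en_ne_top] at hω ⊢
  refine ne_top_of_le_ne_top ?_ (en_conv_le f ω)
  exact ENNReal.mul_ne_top (ENNReal.mul_ne_top (by simp) (enl2_ne_top f)) hω

lemma enl2_eq_ofReal {G : Type*} (f : G →₀ ℂ) : enl2 f = ENNReal.ofReal (l2sq f) := by
  rw [enl2_eq_sum, l2sq, ENNReal.ofReal_sum_of_nonneg (fun g _ => by positivity)]
  refine Finset.sum_congr rfl (fun g _ => ?_)
  rw [← enorm_eq_nnnorm, ← ofReal_norm, ← ENNReal.ofReal_pow (norm_nonneg _)]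

lemma l2sq_nonneg {G : Type*} (f : G →₀ ℂ) : 0 ≤ l2sq f :=
  Finset.sum_nonneg (fun g _ => by positivity)

lemma opB_of_opBound {G : Type*} [Group G] {p : ℝ} (hp : 0 < p) {f : G →₀ ℂ}
    (h : OpBound p f) : OpB p.toNNReal f := by
  intro ω
  by_cases hω : Summable fun g => ‖ω g‖ ^ 2
  · have h1 := h ω hω
    rw [en_eq_ofReal (summable_conv f hω), en_eq_ofReal hω, enl2_eq_ofReal]
    calc ENNReal.ofReal (∑' g, ‖conv f ω g‖ ^ 2)
        ≤ ENNReal.ofReal (p ^ 2 * l2sq f * ∑' g, ‖ω g‖ ^ 2) := ENNReal.ofReal_le_ofReal h1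
      _ = (↑p.toNNReal : ℝ≥0∞) ^ 2 * ENNReal.ofReal (l2sq f) *
            ENNReal.ofReal (∑' g, ‖ω g‖ ^ 2) := by
          rw [ENNReal.ofReal_mul (mul_nonneg (by positivity) (l2sq_nonneg f)),
            ENNReal.ofReal_mul (by positivity),
            ENNReal.ofReal_pow hp.le]
          congr
  · rw [summable_iff_en_ne_top, not_not] at hω
    rw [hω]
    rcases eq_or_ne f 0 with rfl | hf
    · simp [conv, en]
    · have h2 : (↑p.toNNReal : ℝ≥0∞) ^ 2 * enl2 f ≠ 0 := by
        apply mul_ne_zero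
        · simp [pow_eq_zero_iff, Real.toNNReal_eq_zero, not_le, hp]
        · exact fun h0 => hf (enl2_eq_zero_iff.mp h0)
      rw [ENNReal.mul_top h2]
      exact le_top

/-- Base case: a function supported at the identity has operator bound `1`. -/
lemma opB_one {K : Type*} [Group K] {f : K →₀ ℂ} (hf : ↑f.support ⊆ ({1} : Set K)) :
    OpB 1 f := by
  intro ω
  have hs : f.support ⊆ {1} := by
    intro x hx; simpa using hf hx
  have hc : ∀ g, conv f ω g = f 1 * ω g := by
    intro g
    rw [conv_eq_sum_subset hs]
    simp
  have : en (conv f ω) = (‖f 1‖₊ : ℝ≥0∞) ^ 2 * en ω := by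
    unfold en
    simp_rw [hc, nnnorm_mul]
    rw [← ENNReal.tsum_mul_left]
    congr 1; funext g; push_cast; ring
  rw [this]
  gcongr
  have := ENNReal.le_tsum (f := fun g => (‖f g‖₊ : ℝ≥0∞) ^ 2) 1
  simpa [enl2] using this.trans_eq rfl

lemma conv_equivMapDomain {G H : Type*} [Group G] [Group H] (e : G ≃* H) (f : G →₀ ℂ)
    (ω : H → ℂ) (g : G) :
    conv (Finsupp.equivMapDomain e.toEquiv f) ω (e g) = conv f (fun u => ω (e u)) g := by
  have hsupp : (Finsupp.equivMapDomain e.toEquiv f).support =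
      f.support.map e.toEquiv.toEmbedding := rfl
  unfold conv
  rw [hsupp, Finset.sum_map]
  refine Finset.sum_congr rfl (fun h _ => ?_)
  simp only [Equiv.coe_toEmbedding]
  rw [Finsupp.equivMapDomain_apply]
  congr 1
  · congr 1; exact e.toEquiv.symm_apply_apply h
  · congr 1
    show (e h)⁻¹ * e g = e (h⁻¹ * g)
    rw [map_mul, map_inv]

lemma enl2_equivMapDomain {G H : Type*} [Group G] [Group H] (e : G ≃* H) (f : G →₀ ℂ) :
    enl2 (Finsupp.equivMapDomain e.toEquiv f) = enl2 f := by
  unfold enl2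
  rw [← Equiv.tsum_eq e.toEquiv (fun h => (‖Finsupp.equivMapDomain e.toEquiv f h‖₊ : ℝ≥0∞) ^ 2)]
  refine tsum_congr (fun g => ?_)
  rw [Finsupp.equivMapDomain_apply, e.toEquiv.symm_apply_apply]

lemma opB_equivMapDomain {G H : Type*} [Group G] [Group H] (e : G ≃* H) {P : ℝ≥0}
    {f : G →₀ ℂ} (h : OpB P f) : OpB P (Finsupp.equivMapDomain e.toEquiv f) := by
  intro ω
  have h1 : en (conv (Finsupp.equivMapDomain e.toEquiv f) ω) =
      en (conv f (fun u => ω (e u))) := by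
    unfold en
    rw [← Equiv.tsum_eq e.toEquiv
      (fun h' => (‖conv (Finsupp.equivMapDomain e.toEquiv f) ω h'‖₊ : ℝ≥0∞) ^ 2)]
    exact tsum_congr (fun g => by
      rw [show (e.toEquiv g : H) = e g from rfl, conv_equivMapDomain])
  have h2 : en (fun u => ω (e u)) = en ω := by
    unfold en
    exact Equiv.tsum_eq e.toEquiv (fun h' => (‖ω h'‖₊ : ℝ≥0∞) ^ 2)
  rw [h1, enl2_equivMapDomain, ← h2]
  exact h _

lemma coe_nnnorm_toReal {x : ℝ≥0∞} (hx : x ≠ ⊤) :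
    (‖((x.toReal : ℝ) : ℂ)‖₊ : ℝ≥0∞) = x := by
  rw [← enorm_eq_nnnorm, ← ofReal_norm, Complex.norm_real,
    Real.norm_of_nonneg ENNReal.toReal_nonneg, ENNReal.ofReal_toReal hx]

lemma rpow_half_sq (x : ℝ≥0∞) : (x ^ (2⁻¹ : ℝ)) ^ 2 = x := by
  rw [← ENNReal.rpow_natCast _ 2, ← ENNReal.rpow_mul]
  norm_num

lemma sq_rpow_half (x : ℝ≥0∞) : (x ^ 2) ^ (2⁻¹ : ℝ) = x := by
  rw [← ENNReal.rpow_natCast _ 2, ← ENNReal.rpow_mul]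
  norm_num

lemma opB_prod {G H : Type*} [Group G] [Group H] {P Q : ℝ≥0} {E : Set G} {F : Set H}
    (hP : P ≠ 0) (hQ : Q ≠ 0)
    (hG : ∀ f : G →₀ ℂ, ↑f.support ⊆ E → OpB P f)
    (hH : ∀ f : H →₀ ℂ, ↑f.support ⊆ F → OpB Q f)
    (ψ : (G × H) →₀ ℂ) (hψ : ↑ψ.support ⊆ E ×ˢ F) : OpB (P * Q) ψ := by
  classical
  rcases eq_or_ne ψ 0 with rfl | hne
  · intro Ω; simp [conv, en]
  intro Ω
  by_cases hΩ : en Ω = ∞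
  · rw [hΩ, ENNReal.mul_top]
    · exact le_top
    · exact mul_ne_zero (by simpa using And.intro hP hQ)
        (fun h0 => hne (enl2_eq_zero_iff.mp h0))
  -- fibers
  set A : Finset G := ψ.support.image Prod.fst with hA
  set B : Finset H := ψ.support.image Prod.snd with hB
  have hmkinj : ∀ c : G, Function.Injective (Prod.mk c : H → G × H) :=
    fun c a b hab => congrArg Prod.snd hab
  set ψc : G → (H →₀ ℂ) :=
    fun c => Finsupp.comapDomain (Prod.mk c) ψ (Set.injOn_of_injective (hmkinj c)) with hψc
  have hψc_apply : ∀ c y, ψc c y = ψ (c, y) := fun c y => rfl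
  have hψc_supp : ∀ c, ↑(ψc c).support ⊆ F := by
    intro c y hy
    have : ψ (c, y) ≠ 0 := by
      rw [← hψc_apply]; exact Finsupp.mem_support_iff.mp hy
    exact (hψ (Finsupp.mem_support_iff.mpr this)).2
  have hψc_suppB : ∀ c, (ψc c).support ⊆ B := by
    intro c y hy
    have : ψ (c, y) ≠ 0 := by
      rw [← hψc_apply]; exact Finsupp.mem_support_iff.mp hy
    exact Finset.mem_image_of_mem Prod.snd (Finsupp.mem_support_iff.mpr this)
  have hψc_zero : ∀ c ∉ A, ψc c = 0 := by
    intro c hc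
    refine Finsupp.ext (fun y => ?_)
    simp only [Finsupp.coe_zero, Pi.zero_apply]
    by_contra hy
    rw [hψc_apply] at hy
    exact hc (Finset.mem_image_of_mem Prod.fst (Finsupp.mem_support_iff.mpr hy))
  have hsub : ψ.support ⊆ A ×ˢ B := by
    intro q hq
    rw [Finset.mem_product]
    exact ⟨Finset.mem_image_of_mem _ hq, Finset.mem_image_of_mem _ hq⟩
  -- expansion of the convolution
  have hconv : ∀ g x, conv ψ Ω (g, x) =
      ∑ c ∈ A, conv (ψc c) (fun x' => Ω (c⁻¹ * g, x')) x := by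
    intro g x
    rw [conv_eq_sum_subset hsub, Finset.sum_product]
    refine Finset.sum_congr rfl (fun c _ => ?_)
    rw [conv_eq_sum_subset (hψc_suppB c)]
    refine Finset.sum_congr rfl (fun y _ => ?_)
    rw [hψc_apply]
    congr 1
  -- Fubini for Ω
  have henΩ : en Ω = ∑' u, en (fun x => Ω (u, x)) := by
    unfold en
    exact ENNReal.tsum_prod'
  have hrow_fin : ∀ u, en (fun x => Ω (u, x)) ≠ ∞ := by
    intro u
    refine ne_top_of_le_ne_top hΩ ?_
    rw [henΩ]
    exact ENNReal.le_tsum u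
  -- Fubini for ψ
  have henψ : enl2 ψ = ∑' c, enl2 (ψc c) := by
    unfold enl2
    rw [ENNReal.tsum_prod']
    exact tsum_congr (fun c => tsum_congr (fun y => by rw [hψc_apply]))
  -- ENNReal coefficient functions
  set T : G → ℝ≥0∞ := fun c => (Q : ℝ≥0∞) * (enl2 (ψc c)) ^ (2⁻¹ : ℝ) with hT
  set W : G → ℝ≥0∞ := fun u => (en (fun x => Ω (u, x))) ^ (2⁻¹ : ℝ) with hW
  have hT_fin : ∀ c, T c ≠ ∞ := fun c =>
    ENNReal.mul_ne_top ENNReal.coe_ne_top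
      (ENNReal.rpow_ne_top_of_nonneg (by norm_num) (enl2_ne_top _))
  have hW_fin : ∀ u, W u ≠ ∞ := fun u =>
    ENNReal.rpow_ne_top_of_nonneg (by norm_num) (hrow_fin u)
  -- Step A
  have stepA : ∀ g : G, ∑' x, (‖conv ψ Ω (g, x)‖₊ : ℝ≥0∞) ^ 2 ≤
      (∑ c ∈ A, T c * W (c⁻¹ * g)) ^ 2 := by
    intro g
    have h1 : ∀ x : H, (‖conv ψ Ω (g, x)‖₊ : ℝ≥0∞) ^ 2 ≤
        (∑ c ∈ A, (‖conv (ψc c) (fun x' => Ω (c⁻¹ * g, x')) x‖₊ : ℝ≥0∞)) ^ 2 := by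
      intro x
      gcongr
      rw [hconv g x]
      calc (‖∑ c ∈ A, conv (ψc c) (fun x' => Ω (c⁻¹ * g, x')) x‖₊ : ℝ≥0∞)
          ≤ ((∑ c ∈ A, ‖conv (ψc c) (fun x' => Ω (c⁻¹ * g, x')) x‖₊ : ℝ≥0) : ℝ≥0∞) := by
            exact_mod_cast nnnorm_sum_le _ _
        _ = _ := by push_cast; rfl
    calc ∑' x, (‖conv ψ Ω (g, x)‖₊ : ℝ≥0∞) ^ 2
        ≤ ∑' x, (∑ c ∈ A, (‖conv (ψc c) (fun x' => Ω (c⁻¹ * g, x')) x‖₊ : ℝ≥0∞)) ^ 2 :=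
          ENNReal.tsum_le_tsum h1
      _ ≤ (∑ c ∈ A, (∑' x, (‖conv (ψc c) (fun x' => Ω (c⁻¹ * g, x')) x‖₊ : ℝ≥0∞) ^ 2) ^
            (2⁻¹ : ℝ)) ^ 2 := MKsq A _
      _ ≤ (∑ c ∈ A, T c * W (c⁻¹ * g)) ^ 2 := by
          gcongr with c hc
          have hb := hH (ψc c) (hψc_supp c) (fun x' => Ω (c⁻¹ * g, x'))
          have hb2 : en (conv (ψc c) (fun x' => Ω (c⁻¹ * g, x'))) ^ (2⁻¹ : ℝ) ≤
              ((Q : ℝ≥0∞) ^ 2 * enl2 (ψc c) * en (fun x' => Ω (c⁻¹ * g, x'))) ^ (2⁻¹ : ℝ) :=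
            ENNReal.rpow_le_rpow hb (by norm_num)
          refine le_trans (le_of_eq rfl) (hb2.trans (le_of_eq ?_))
          rw [ENNReal.mul_rpow_of_nonneg _ _ (by norm_num),
            ENNReal.mul_rpow_of_nonneg _ _ (by norm_num), sq_rpow_half]
  -- the scalar majorants
  set t : G →₀ ℂ := Finsupp.onFinset A (fun c => ((T c).toReal : ℂ)) (by
    intro c hc
    by_contra hcA
    apply hc
    rw [hT]
    simp only [hψc_zero c hcA]
    rw [show enl2 (0 : H →₀ ℂ) = 0 from enl2_eq_zero_iff.mpr rfl,
      ENNReal.zero_rpow_of_pos (by norm_num), mul_zero]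
    simp) with ht_def
  set w : G → ℂ := fun u => ((W u).toReal : ℂ) with hw_def
  have ht_apply : ∀ c, t c = ((T c).toReal : ℂ) := fun c => Finsupp.onFinset_apply
  have ht_nn : ∀ c, (‖t c‖₊ : ℝ≥0∞) = T c := by
    intro c; rw [ht_apply, coe_nnnorm_toReal (hT_fin c)]
  have hw_nn : ∀ u, (‖w u‖₊ : ℝ≥0∞) = W u := by
    intro u; rw [hw_def]; exact coe_nnnorm_toReal (hW_fin u)
  have ht_supp : ↑t.support ⊆ E := by
    intro c hc
    have htc : t c ≠ 0 := Finsupp.mem_support_iff.mp hc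
    have hTc : T c ≠ 0 := by
      intro h0
      apply htc
      rw [ht_apply, h0]
      simp
    have hψcne : ψc c ≠ 0 := by
      intro h0
      apply hTc
      rw [hT]
      simp only [h0]
      rw [show enl2 (0 : H →₀ ℂ) = 0 from enl2_eq_zero_iff.mpr rfl,
        ENNReal.zero_rpow_of_pos (by norm_num), mul_zero]
    obtain ⟨y, hy⟩ : ∃ y, ψ (c, y) ≠ 0 := by
      by_contra hall
      push_neg at hall
      exact hψcne (Finsupp.ext (fun y => by rw [hψc_apply, hall y]; rfl))
    exact (hψ (Finsupp.mem_support_iff.mpr hy)).1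
  have hconv_tw : ∀ g, (‖conv t w g‖₊ : ℝ≥0∞) = ∑ c ∈ A, T c * W (c⁻¹ * g) := by
    intro g
    have h1 : conv t w g = ∑ c ∈ A, t c * w (c⁻¹ * g) :=
      conv_eq_sum_subset Finsupp.support_onFinset_subset w g
    rw [h1]
    have h2 : ∑ c ∈ A, t c * w (c⁻¹ * g) =
        ((∑ c ∈ A, (T c).toReal * (W (c⁻¹ * g)).toReal : ℝ) : ℂ) := by
      push_cast
      refine Finset.sum_congr rfl (fun c _ => ?_)
      rw [ht_apply]
    rw [h2, ← enorm_eq_nnnorm, ← ofReal_norm, Complex.norm_real, Real.norm_of_nonneg (by positivity)]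
    rw [ENNReal.ofReal_sum_of_nonneg (fun c _ => by positivity)]
    refine Finset.sum_congr rfl (fun c _ => ?_)
    rw [ENNReal.ofReal_mul ENNReal.toReal_nonneg, ENNReal.ofReal_toReal (hT_fin c),
      ENNReal.ofReal_toReal (hW_fin _)]
  have hw_sq : ∀ u, (‖w u‖₊ : ℝ≥0∞) ^ 2 = en (fun x => Ω (u, x)) := fun u => by
    rw [hw_nn, hW]; exact rpow_half_sq _
  have hen_w : en w = en Ω := by
    calc en w = ∑' u, (‖w u‖₊ : ℝ≥0∞) ^ 2 := rfl
      _ = ∑' u, en (fun x => Ω (u, x)) := tsum_congr hw_sq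
      _ = en Ω := henΩ.symm
  have ht_sq : ∀ c, (‖t c‖₊ : ℝ≥0∞) ^ 2 = (Q : ℝ≥0∞) ^ 2 * enl2 (ψc c) := fun c => by
    rw [ht_nn, hT, mul_pow, rpow_half_sq]
  have henl2_t : enl2 t = (Q : ℝ≥0∞) ^ 2 * enl2 ψ := by
    calc enl2 t = ∑' c, (‖t c‖₊ : ℝ≥0∞) ^ 2 := rfl
      _ = ∑' c, (Q : ℝ≥0∞) ^ 2 * enl2 (ψc c) := tsum_congr ht_sq
      _ = (Q : ℝ≥0∞) ^ 2 * ∑' c, enl2 (ψc c) := ENNReal.tsum_mul_left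
      _ = _ := by rw [henψ]
  -- final chain
  calc en (conv ψ Ω)
      = ∑' g, ∑' x, (‖conv ψ Ω (g, x)‖₊ : ℝ≥0∞) ^ 2 := by
        unfold en; exact ENNReal.tsum_prod'
    _ ≤ ∑' g, (∑ c ∈ A, T c * W (c⁻¹ * g)) ^ 2 :=
        ENNReal.tsum_le_tsum stepA
    _ = en (conv t w) := by
        unfold en
        exact tsum_congr (fun g => by rw [hconv_tw])
    _ ≤ (P : ℝ≥0∞) ^ 2 * enl2 t * en w := hG t ht_supp w
    _ = ((P * Q : ℝ≥0) : ℝ≥0∞) ^ 2 * enl2 ψ * en Ω := by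
        rw [henl2_t, hen_w]
        push_cast
        ring

/-- The multiplicative equivalence `(Fin (k+1) → G) ≃* G × (Fin k → G)`. -/
def piSuccMulEquiv (k : ℕ) (G : Type*) [Group G] :
    (Fin (k + 1) → G) ≃* G × (Fin k → G) :=
  { (Fin.consEquiv fun _ : Fin (k + 1) => G).symm with
    map_mul' := fun _ _ => rfl }

lemma opB_pi {G : Type*} [Group G] {P : ℝ≥0} {E : Set G} (hP : P ≠ 0)
    (hG : ∀ f : G →₀ ℂ, ↑f.support ⊆ E → OpB P f) :
    ∀ (k : ℕ) (ψ : (Fin k → G) →₀ ℂ),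
      (↑ψ.support ⊆ {x : Fin k → G | ∀ i, x i ∈ E}) → OpB (P ^ k) ψ := by
  intro k
  induction k with
  | zero =>
    intro ψ _
    have : ↑ψ.support ⊆ ({1} : Set (Fin 0 → G)) := by
      intro x _
      simp only [Set.mem_singleton_iff]
      funext i
      exact absurd i.2 (Nat.not_lt_zero _)
    simpa using opB_one this
  | succ k ih =>
    intro ψ hψ
    set e := piSuccMulEquiv k G with he
    set ψ' := Finsupp.equivMapDomain e.toEquiv ψ with hψ'
    have hsupp' : ↑ψ'.support ⊆ {c : G | c ∈ E} ×ˢ {x : Fin k → G | ∀ i, x i ∈ E} := by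
      intro q hq
      have hq' : ψ' q ≠ 0 := Finsupp.mem_support_iff.mp hq
      rw [hψ', Finsupp.equivMapDomain_apply] at hq'
      have hmem : (e.toEquiv.symm q : Fin (k + 1) → G) ∈ ψ.support :=
        Finsupp.mem_support_iff.mpr hq'
      have hall : ∀ i, (e.toEquiv.symm q : Fin (k + 1) → G) i ∈ E := hψ hmem
      have hq1 : q.1 = (e.toEquiv.symm q : Fin (k + 1) → G) 0 := by
        have := congrArg Prod.fst (e.toEquiv.apply_symm_apply q)
        exact this.symm
      have hq2 : ∀ i : Fin k, q.2 i = (e.toEquiv.symm q : Fin (k + 1) → G) i.succ := by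
        intro i
        have := congrArg (fun z : G × (Fin k → G) => z.2 i) (e.toEquiv.apply_symm_apply q)
        exact this.symm
      constructor
      · rw [Set.mem_setOf_eq, hq1]; exact hall 0
      · intro i; rw [hq2 i]; exact hall i.succ
    have h1 : OpB (P * P ^ k) ψ' :=
      opB_prod hP (pow_ne_zero k hP) hG ih ψ' hsupp'
    have h2 : OpB (P * P ^ k) (Finsupp.equivMapDomain e.symm.toEquiv ψ') :=
      opB_equivMapDomain e.symm h1
    have h3 : Finsupp.equivMapDomain e.symm.toEquiv ψ' = ψ := by
      rw [hψ']
      refine Finsupp.ext (fun x => ?_)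
      rw [Finsupp.equivMapDomain_apply, Finsupp.equivMapDomain_apply]
      congr 1
      show e.toEquiv.symm (e.symm.toEquiv.symm x) = x
      simp
    rw [h3] at h2
    have : P * P ^ k = P ^ (k + 1) := (pow_succ' P k).symm
    rwa [this] at h2

/-- Reindexing multiplicative equivalence for power groups. -/
def piCongrMulEquiv {ι κ : Type*} (e0 : ι ≃ κ) (G : Type*) [Group G] :
    (ι → G) ≃* (κ → G) where
  toFun x := fun j => x (e0.symm j)
  invFun y := fun i => y (e0 i)
  left_inv x := funext fun i => by simp
  right_inv y := funext fun j => by simp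
  map_mul' x y := rfl

lemma opB_pi' {G : Type*} [Group G] {P : ℝ≥0} {E : Set G} (hP : P ≠ 0)
    (hG : ∀ f : G →₀ ℂ, ↑f.support ⊆ E → OpB P f)
    (ι : Type*) [Fintype ι] (ψ : (ι → G) →₀ ℂ)
    (hψ : ↑ψ.support ⊆ {x : ι → G | ∀ i, x i ∈ E}) : OpB (P ^ Fintype.card ι) ψ := by
  set e0 := Fintype.equivFin ι with he0
  set e := piCongrMulEquiv e0 G with he
  set ψ' := Finsupp.equivMapDomain e.toEquiv ψ with hψ'
  have hsupp' : ↑ψ'.support ⊆ {x : Fin (Fintype.card ι) → G | ∀ j, x j ∈ E} := by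
    intro q hq
    have hq' : ψ (e.toEquiv.symm q) ≠ 0 := by
      have := Finsupp.mem_support_iff.mp hq
      rwa [hψ', Finsupp.equivMapDomain_apply] at this
    have hall : ∀ i, (e.toEquiv.symm q : ι → G) i ∈ E := hψ (Finsupp.mem_support_iff.mpr hq')
    intro j
    have : q j = (e.toEquiv.symm q : ι → G) (e0.symm j) := by
      have := congrFun (e.toEquiv.apply_symm_apply q) j
      exact this.symm
    rw [this]
    exact hall _
  have h1 : OpB (P ^ Fintype.card ι) ψ' := opB_pi hP hG _ ψ' hsupp'
  have h2 := opB_equivMapDomain e.symm h1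
  have h3 : Finsupp.equivMapDomain e.symm.toEquiv ψ' = ψ := by
    rw [hψ']
    refine Finsupp.ext (fun x => ?_)
    rw [Finsupp.equivMapDomain_apply, Finsupp.equivMapDomain_apply]
    congr 1
    show e.toEquiv.symm (e.symm.toEquiv.symm x) = x
    simp
  rwa [h3] at h2

/-- Splitting a power group along a finset of coordinates. -/
def splitMulEquiv {n : ℕ} (S : Finset (Fin n)) (G : Type*) [Group G] :
    (Fin n → G) ≃* (({i : Fin n // i ∈ S} → G) × ({i : Fin n // i ∉ S} → G)) where
  toFun x := (fun i => x i.1, fun i => x i.1)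
  invFun q := fun i => if h : i ∈ S then q.1 ⟨i, h⟩ else q.2 ⟨i, h⟩
  left_inv x := funext fun i => by by_cases h : i ∈ S <;> simp [h]
  right_inv q := by
    refine Prod.ext ?_ ?_ <;> funext i
    · simp [i.2]
    · simp [i.2]
  map_mul' x y := rfl

lemma opB_S {G : Type*} [Group G] {P : ℝ≥0} {E : Set G} (hP : P ≠ 0)
    (hG : ∀ f : G →₀ ℂ, ↑f.support ⊆ E → OpB P f)
    {n : ℕ} (S : Finset (Fin n)) (ψ : (Fin n → G) →₀ ℂ)
    (hψ : ∀ x ∈ ψ.support, (∀ i ∈ S, x i ∈ E) ∧ ∀ i ∉ S, x i = 1) :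
    OpB (P ^ S.card) ψ := by
  classical
  set e := splitMulEquiv S G with he
  set ψ' := Finsupp.equivMapDomain e.toEquiv ψ with hψ'
  have hsupp' : ↑ψ'.support ⊆
      {u : {i : Fin n // i ∈ S} → G | ∀ i, u i ∈ E} ×ˢ
        ({1} : Set ({i : Fin n // i ∉ S} → G)) := by
    intro q hq
    have hq' : ψ (e.toEquiv.symm q) ≠ 0 := by
      have := Finsupp.mem_support_iff.mp hq
      rwa [hψ', Finsupp.equivMapDomain_apply] at this
    obtain ⟨hE, h1⟩ := hψ _ (Finsupp.mem_support_iff.mpr hq')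
    have hqeq := e.toEquiv.apply_symm_apply q
    constructor
    · intro i
      have : q.1 i = (e.toEquiv.symm q : Fin n → G) i.1 := by
        have := congrFun (congrArg Prod.fst hqeq) i
        exact this.symm
      rw [this]
      exact hE i.1 i.2
    · show q.2 ∈ ({1} : Set _)
      simp only [Set.mem_singleton_iff]
      funext i
      have : q.2 i = (e.toEquiv.symm q : Fin n → G) i.1 := by
        have := congrFun (congrArg Prod.snd hqeq) i
        exact this.symm
      rw [this]
      exact h1 i.1 i.2
  have hG1 : ∀ f : ({i : Fin n // i ∈ S} → G) →₀ ℂ,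
      ↑f.support ⊆ {u : {i : Fin n // i ∈ S} → G | ∀ i, u i ∈ E} →
        OpB (P ^ Fintype.card {i : Fin n // i ∈ S}) f :=
    fun f hf => opB_pi' hP hG _ f hf
  have hH1 : ∀ f : ({i : Fin n // i ∉ S} → G) →₀ ℂ,
      ↑f.support ⊆ ({1} : Set ({i : Fin n // i ∉ S} → G)) → OpB 1 f :=
    fun f hf => opB_one hf
  have h1 : OpB (P ^ Fintype.card {i : Fin n // i ∈ S} * 1) ψ' :=
    opB_prod (pow_ne_zero _ hP) one_ne_zero hG1 hH1 ψ' hsupp'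
  have h2 := opB_equivMapDomain e.symm h1
  have h3 : Finsupp.equivMapDomain e.symm.toEquiv ψ' = ψ := by
    rw [hψ']
    refine Finsupp.ext (fun x => ?_)
    rw [Finsupp.equivMapDomain_apply, Finsupp.equivMapDomain_apply]
    congr 1
    show e.toEquiv.symm (e.symm.toEquiv.symm x) = x
    simp
  rw [h3] at h2
  have hcard : Fintype.card {i : Fin n // i ∈ S} = S.card := Fintype.card_coe S
  rwa [mul_one, hcard] at h2

/-- If `‖λ_G(f)‖ ≤ p‖f‖₂` for `f` supported in `E`, then for
`φ : Gⁿ → ℂ` supported in `Eⁿ ∩ P_m^n` (elements with exactly `m` non-identity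
coordinates, all coordinates in `E`), `‖λ_{Gⁿ}(φ)‖ ≤ √(binom n m) · pᵐ · ‖φ‖₂`. -/
theorem stmt2 {G : Type*} [Group G] [Countable G]
    (p : ℝ) (hp : 0 < p) (E : Set G)
    (hG : ∀ f : G →₀ ℂ, ↑f.support ⊆ E → OpBound p f)
    (n m : ℕ) (hm : 1 ≤ m) (hmn : m ≤ n)
    (φ : (Fin n → G) →₀ ℂ)
    (hφ : ∀ x ∈ φ.support, (∀ i, x i ∈ E) ∧ ({i : Fin n | x i ≠ 1} : Set (Fin n)).ncard = m) :
    ∀ ω : (Fin n → G) → ℂ, Summable (fun g => ‖ω g‖ ^ 2) →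
      ∑' g, ‖conv φ ω g‖ ^ 2 ≤ (n.choose m : ℝ) * p ^ (2 * m) * l2sq φ * ∑' g, ‖ω g‖ ^ 2 := by
  classical
  intro ω hω
  set Pn : ℝ≥0 := p.toNNReal with hPn
  have hPn0 : Pn ≠ 0 := by
    rw [hPn]
    simp [Real.toNNReal_eq_zero, not_le, hp]
  have hG' : ∀ f : G →₀ ℂ, ↑f.support ⊆ E → OpB Pn f :=
    fun f hf => opB_of_opBound hp (hG f hf)
  set 𝒮 : Finset (Finset (Fin n)) := Finset.powersetCard m Finset.univ with h𝒮
  set φS : Finset (Fin n) → ((Fin n → G) →₀ ℂ) :=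
    fun S => φ.filter (fun x => (Finset.univ.filter (fun i => x i ≠ 1)) = S) with hφS
  have hφS_apply : ∀ S x, φS S x =
      if (Finset.univ.filter (fun i => x i ≠ 1)) = S then φ x else 0 := by
    intro S x
    rfl
  have hφS_supp : ∀ S, (φS S).support ⊆ φ.support := by
    intro S
    rw [hφS, Finsupp.support_filter]
    exact Finset.filter_subset _ _
  have hS0 : ∀ x ∈ φ.support, (Finset.univ.filter (fun i => x i ≠ 1)) ∈ 𝒮 := by
    intro x hx
    rw [h𝒮, Finset.mem_powersetCard]
    refine ⟨Finset.subset_univ _, ?_⟩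
    have h1 := (hφ x hx).2
    have h2 : ({i : Fin n | x i ≠ 1} : Set (Fin n)) =
        ↑(Finset.univ.filter (fun i => x i ≠ 1)) := by
      ext i
      simp
    rw [h2, Set.ncard_coe_finset] at h1
    exact h1
  have hdecomp : ∀ x, φ x = ∑ S ∈ 𝒮, φS S x := by
    intro x
    by_cases hx : φ x = 0
    · rw [hx]
      refine (Finset.sum_eq_zero (fun S _ => ?_)).symm
      rw [hφS_apply]
      split <;> simp [hx]
    · have hx' : x ∈ φ.support := Finsupp.mem_support_iff.mpr hx
      rw [Finset.sum_eq_single (Finset.univ.filter (fun i => x i ≠ 1))]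
      · rw [hφS_apply, if_pos rfl]
      · intro S _ hSne
        rw [hφS_apply, if_neg (fun h => hSne h.symm)]
      · intro hnot
        exact absurd (hS0 x hx') hnot
  have hconv_decomp : ∀ g, conv φ ω g = ∑ S ∈ 𝒮, conv (φS S) ω g := by
    intro g
    have h1 : conv φ ω g = ∑ h ∈ φ.support, (∑ S ∈ 𝒮, φS S h) * ω (h⁻¹ * g) := by
      unfold conv
      exact Finset.sum_congr rfl (fun h _ => by rw [← hdecomp])
    rw [h1]
    simp_rw [Finset.sum_mul]
    rw [Finset.sum_comm]
    refine Finset.sum_congr rfl (fun S _ => ?_)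
    exact (conv_eq_sum_subset (hφS_supp S) ω g).symm
  have hOpB : ∀ S ∈ 𝒮, OpB (Pn ^ m) (φS S) := by
    intro S hS
    have hcard : S.card = m := (Finset.mem_powersetCard.mp (by rwa [← h𝒮])).2
    rw [← hcard]
    refine opB_S hPn0 hG' S (φS S) ?_
    intro x hx
    have hx' : x ∈ φ.support := hφS_supp S hx
    have hcond : (Finset.univ.filter (fun i => x i ≠ 1)) = S := by
      have := Finsupp.mem_support_iff.mp hx
      rw [hφS_apply] at this
      by_contra hne
      rw [if_neg hne] at this
      exact this rfl
    constructor
    · intro i _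
      exact (hφ x hx').1 i
    · intro i hi
      by_contra hne
      exact hi (hcond ▸ Finset.mem_filter.mpr ⟨Finset.mem_univ i, hne⟩)
  -- sum of enl2 over pieces
  have henl2_sum : ∑ S ∈ 𝒮, enl2 (φS S) = enl2 φ := by
    unfold enl2
    rw [← Summable.tsum_finsetSum (fun S _ => ENNReal.summable)]
    refine tsum_congr (fun x => ?_)
    by_cases hx : φ x = 0
    · have : ∀ S ∈ 𝒮, (‖φS S x‖₊ : ℝ≥0∞) ^ 2 = 0 := by
        intro S _
        rw [hφS_apply]
        split <;> simp [hx]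
      rw [Finset.sum_congr rfl this]
      simp [hx]
    · have hx' : x ∈ φ.support := Finsupp.mem_support_iff.mpr hx
      rw [Finset.sum_eq_single (Finset.univ.filter (fun i => x i ≠ 1))]
      · rw [hφS_apply, if_pos rfl]
      · intro S _ hSne
        rw [hφS_apply, if_neg (fun h => hSne h.symm)]
        simp
      · intro hnot
        exact absurd (hS0 x hx') hnot
  -- pointwise Cauchy-Schwarz
  have hpt : ∀ g, (‖conv φ ω g‖₊ : ℝ≥0∞) ^ 2 ≤
      (𝒮.card : ℝ≥0∞) * ∑ S ∈ 𝒮, (‖conv (φS S) ω g‖₊ : ℝ≥0∞) ^ 2 := by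
    intro g
    calc (‖conv φ ω g‖₊ : ℝ≥0∞) ^ 2
        ≤ ((∑ S ∈ 𝒮, ‖conv (φS S) ω g‖₊ : ℝ≥0) : ℝ≥0∞) ^ 2 := by
          gcongr
          rw [hconv_decomp g]
          exact_mod_cast nnnorm_sum_le _ _
      _ ≤ (𝒮.card : ℝ≥0∞) * ∑ S ∈ 𝒮, ((‖conv (φS S) ω g‖₊ : ℝ≥0) : ℝ≥0∞) ^ 2 :=
          sq_sum_le_card_ennreal _ _
  -- main ENNReal estimate
  have hmain : en (conv φ ω) ≤
      ((n.choose m : ℕ) : ℝ≥0∞) * (Pn : ℝ≥0∞) ^ (2 * m) * enl2 φ * en ω := by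
    have hcard𝒮 : 𝒮.card = n.choose m := by
      rw [h𝒮, Finset.card_powersetCard, Finset.card_univ, Fintype.card_fin]
    calc en (conv φ ω)
        ≤ ∑' g, (𝒮.card : ℝ≥0∞) * ∑ S ∈ 𝒮, (‖conv (φS S) ω g‖₊ : ℝ≥0∞) ^ 2 :=
          ENNReal.tsum_le_tsum hpt
      _ = (𝒮.card : ℝ≥0∞) * ∑ S ∈ 𝒮, en (conv (φS S) ω) := by
          rw [ENNReal.tsum_mul_left]
          congr 1
          rw [Summable.tsum_finsetSum (fun S _ => ENNReal.summable)]
          rfl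
      _ ≤ (𝒮.card : ℝ≥0∞) * ∑ S ∈ 𝒮, ((Pn ^ m : ℝ≥0) : ℝ≥0∞) ^ 2 * enl2 (φS S) * en ω := by
          gcongr with S hS
          exact hOpB S hS ω
      _ = (𝒮.card : ℝ≥0∞) * ((Pn : ℝ≥0∞) ^ (2 * m) * (∑ S ∈ 𝒮, enl2 (φS S)) * en ω) := by
          congr 1
          rw [Finset.mul_sum, Finset.sum_mul]
          refine Finset.sum_congr rfl (fun S _ => ?_)
          have hc : ((Pn ^ m : ℝ≥0) : ℝ≥0∞) ^ 2 = (Pn : ℝ≥0∞) ^ (2 * m) := by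
            push_cast
            rw [← pow_mul, mul_comm]
          rw [hc]
      _ = _ := by
          rw [henl2_sum, hcard𝒮]
          ring
  -- convert back to real
  have hsum_conv := summable_conv φ hω
  rw [en_eq_ofReal hsum_conv, en_eq_ofReal hω, enl2_eq_ofReal] at hmain
  have hPofReal : (Pn : ℝ≥0∞) = ENNReal.ofReal p := rfl
  rw [hPofReal, ← ENNReal.ofReal_pow hp.le] at hmain
  have hrw : ENNReal.ofReal ((n.choose m : ℝ) * p ^ (2 * m) * l2sq φ * ∑' g, ‖ω g‖ ^ 2) =
      ((n.choose m : ℕ) : ℝ≥0∞) * ENNReal.ofReal (p ^ (2 * m)) *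
        ENNReal.ofReal (l2sq φ) * ENNReal.ofReal (∑' g, ‖ω g‖ ^ 2) := by
    rw [ENNReal.ofReal_mul (mul_nonneg (mul_nonneg (by positivity) (by positivity))
        (l2sq_nonneg φ)),
      ENNReal.ofReal_mul (mul_nonneg (by positivity) (by positivity)),
      ENNReal.ofReal_mul (by positivity), ENNReal.ofReal_natCast]
  rw [← hrw] at hmain
  have hnn : 0 ≤ (n.choose m : ℝ) * p ^ (2 * m) * l2sq φ * ∑' g, ‖ω g‖ ^ 2 :=
    mul_nonneg (mul_nonneg (mul_nonneg (by positivity) (by positivity)) (l2sq_nonneg φ))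
      (tsum_nonneg (fun g => by positivity))
  exact (ENNReal.ofReal_le_ofReal_iff hnn).mp hmain
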